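/- For every k ≥ 2 and every n ≥ 0, p_k(n) ≥ 2^{⌊√(2n/3 + 1/4) − 1/2⌋}. -/

import Mathlib

/-- The number of `k`-regular partitions of `n`: partitions of `n` with no part divisible
by `k`. -/
def regularPartitions (k n : ℕ) : ℕ :=
  (Finset.univ.filter fun p : n.Partition => ∀ i ∈ p.parts, ¬ k ∣ i).card

/-!
For every `i ≥ 1` one of `2i`, `2i + 1` is not divisible by `k` (as `k ≠ 1`); call it `b i`.
The `b i` with `1 ≤ i ≤ m` are distinct and sum to at most `m (m + 2)`, so if `m (m + 2) ≤ n`,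
each of the `2 ^ m` subsets of them, padded with parts `1`, is a `k`-regular partition of `n`,
and the subset is recovered as the parts different from `1`. Finally
`m = ⌊√(2n/3 + 1/4) - 1/2⌋` satisfies `3 m (m + 1) ≤ 2n`, hence `m (m + 2) ≤ n`.
-/

def Nat.Partition.padOnes {n : ℕ} (s : Multiset ℕ) (hpos : ∀ i ∈ s, 0 < i)
    (hsum : s.sum ≤ n) : n.Partition where
  parts := s + Multiset.replicate (n - s.sum) 1
  parts_pos {i} hi := by
    rcases Multiset.mem_add.mp hi with hi | hi
    · exact hpos i hi
    · rw [Multiset.eq_of_mem_replicate hi]; exact one_pos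
  parts_sum := by
    rw [Multiset.sum_add, Multiset.sum_replicate, smul_eq_mul, mul_one]
    omega

namespace Nat.Partition

variable {n : ℕ} {s : Multiset ℕ} (hpos : ∀ i ∈ s, 0 < i) (hsum : s.sum ≤ n)

theorem mem_parts_padOnes {i : ℕ} (hi : i ∈ (padOnes s hpos hsum).parts) : i ∈ s ∨ i = 1 :=
  (Multiset.mem_add.mp hi).imp id Multiset.eq_of_mem_replicate

theorem filter_ne_one_parts_padOnes (h1 : 1 ∉ s) :
    (padOnes s hpos hsum).parts.filter (· ≠ 1) = s := by
  rw [padOnes, Multiset.filter_add,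
    Multiset.filter_eq_self.mpr fun i hi => ne_of_mem_of_not_mem hi h1,
    Multiset.filter_eq_nil.mpr fun i hi h => h (Multiset.eq_of_mem_replicate hi), add_zero]

end Nat.Partition

theorem two_pow_card_le_regularPartitions {k n : ℕ} (hk : k ≠ 1) (T : Finset ℕ)
    (hT : ∀ i ∈ T, 1 < i) (hTk : ∀ i ∈ T, ¬ k ∣ i) (hsum : ∑ i ∈ T, i ≤ n) :
    2 ^ T.card ≤ regularPartitions k n := by
  have hpos (S : T.powerset) : ∀ i ∈ S.1.val, 0 < i := fun i hi =>
    Nat.zero_lt_of_lt (hT i (Finset.mem_powerset.mp S.2 hi))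
  have hsumS (S : T.powerset) : S.1.val.sum ≤ n :=
    S.1.sum_val ▸ (Finset.sum_le_sum_of_subset (Finset.mem_powerset.mp S.2)).trans hsum
  let f (S : T.powerset) : {p : n.Partition // ∀ i ∈ p.parts, ¬ k ∣ i} :=
    ⟨.padOnes S.1.val (hpos S) (hsumS S), fun i hi => by
      rcases Nat.Partition.mem_parts_padOnes _ _ hi with hi | rfl
      · exact hTk i (Finset.mem_powerset.mp S.2 hi)
      · exact mt Nat.dvd_one.mp hk⟩
  have hf : Function.Injective f := by
    intro S S' h
    have h1 (S : T.powerset) : 1 ∉ S.1.val := fun h =>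
      (hT 1 (Finset.mem_powerset.mp S.2 h)).false
    have := congrArg (fun p => p.1.parts.filter (· ≠ 1)) h
    simp only [f, Nat.Partition.filter_ne_one_parts_padOnes _ _ (h1 _)] at this
    exact Subtype.ext (Finset.val_injective this)
  simpa [regularPartitions, Fintype.card_subtype] using Fintype.card_le_of_injective f hf

def evenOrOddNotDvd (k i : ℕ) : ℕ := if k ∣ 2 * i + 1 then 2 * i else 2 * i + 1

section evenOrOddNotDvd

variable (k i : ℕ)

theorem two_mul_le_evenOrOddNotDvd : 2 * i ≤ evenOrOddNotDvd k i := by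
  unfold evenOrOddNotDvd; split <;> omega

theorem evenOrOddNotDvd_le : evenOrOddNotDvd k i ≤ 2 * i + 1 := by
  unfold evenOrOddNotDvd; split <;> omega

theorem strictMono_evenOrOddNotDvd : StrictMono (evenOrOddNotDvd k) :=
  strictMono_nat_of_lt_succ fun i => by
    have := evenOrOddNotDvd_le k i
    have := two_mul_le_evenOrOddNotDvd k (i + 1)
    omega

theorem not_dvd_evenOrOddNotDvd {k : ℕ} (hk : k ≠ 1) : ¬ k ∣ evenOrOddNotDvd k i := by
  unfold evenOrOddNotDvd
  split_ifs with h
  · exact fun h' => hk (Nat.dvd_one.mp ((Nat.dvd_add_right h').mp h))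
  · exact h

end evenOrOddNotDvd

theorem sum_Icc_two_mul_add_one (m : ℕ) :
    ∑ i ∈ Finset.Icc 1 m, (2 * i + 1) = m * (m + 2) := by
  induction m with
  | zero => simp
  | succ m ih =>
    rw [Finset.sum_Icc_succ_top (by omega), ih]
    ring

theorem two_pow_le_regularPartitions {k n m : ℕ} (hk : k ≠ 1) (h : m * (m + 2) ≤ n) :
    2 ^ m ≤ regularPartitions k n := by
  have hinj := (strictMono_evenOrOddNotDvd k).injective
  have hsum : ∑ i ∈ Finset.Icc 1 m, evenOrOddNotDvd k i ≤ m * (m + 2) :=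
    sum_Icc_two_mul_add_one m ▸ Finset.sum_le_sum fun i _ => evenOrOddNotDvd_le k i
  have := two_pow_card_le_regularPartitions (n := n) hk
    ((Finset.Icc 1 m).image (evenOrOddNotDvd k))
    (by
      simp only [Finset.mem_image, Finset.mem_Icc, forall_exists_index, and_imp]
      rintro _ i hi - rfl
      linarith [two_mul_le_evenOrOddNotDvd k i])
    (by
      simp only [Finset.mem_image]
      rintro _ ⟨i, -, rfl⟩
      exact not_dvd_evenOrOddNotDvd i hk)
    (by rw [Finset.sum_image fun i _ j _ h => hinj h]; omega)
  rwa [Finset.card_image_of_injective _ hinj, Nat.card_Icc, Nat.add_sub_cancel] at this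

/-- `√(2x/3 + 1/4) - 1/2` is the positive root of `m (m + 1) = 2x/3`. -/
theorem three_mul_mul_add_one_le_of_le_sqrt_sub {m : ℕ} {x : ℝ}
    (h : (m : ℝ) ≤ √(2 * x / 3 + 1 / 4) - 1 / 2) : 3 * (m * (m + 1)) ≤ 2 * x := by
  have h' : (m + 1 / 2 : ℝ) ≤ √(2 * x / 3 + 1 / 4) := by linarith
  have hpos : 0 < 2 * x / 3 + 1 / 4 := Real.sqrt_pos.mp (by linarith [m.cast_nonneg (α := ℝ)])
  have := (Real.le_sqrt (by positivity) hpos.le).mp h'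
  nlinarith

/-- For every `k ≥ 2` and `n ≥ 0`, `p_k(n) ≥ 2^{⌊√(2n/3 + 1/4) - 1/2⌋}`. -/
theorem regular_lower_bound_floor (k n : ℕ) (hk : 2 ≤ k) :
    (regularPartitions k n : ℝ) ≥
      (2 : ℝ) ^ (⌊Real.sqrt (2 * n / 3 + 1 / 4) - 1 / 2⌋ : ℤ) := by
  have hr : 0 ≤ √(2 * n / 3 + 1 / 4) - 1 / 2 :=
    sub_nonneg.mpr ((Real.le_sqrt (by norm_num) (by positivity)).mpr (by norm_num; positivity))
  have hm := three_mul_mul_add_one_le_of_le_sqrt_sub (Nat.floor_le hr)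
  rw [← Int.natCast_floor_eq_floor hr, zpow_natCast, ge_iff_le]
  generalize ⌊(_ : ℝ)⌋₊ = m at hm ⊢
  have hm : 3 * (m * (m + 1)) ≤ 2 * n := by exact_mod_cast hm
  exact_mod_cast two_pow_le_regularPartitions (by omega)
    (by nlinarith [Nat.le_self_pow two_ne_zero m])
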